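/- Let f(r) > 0 and b_γ with 1 − f(r)b_γ²/r² > 0 at all radii along the ray. If dφ/dr = b_γ/(r²√(1 − f(r)b_γ²/r²)) along the projected null geodesic, then substituting φ'(r) into the geodesic-curvature element k_g ds = (r/√f)·(φ'' + (2/r)φ' + (f'/(2f))φ' + f r (φ')³)/((1/f) + r²(φ')²) dr yields k_g ds = (f'(r)/(2r))·b_γ dr/√(f(r)(1 − f(r)b_γ²/r²)). In particular k_g ds vanishes when f' ≡ 0 or b_γ = 0. -/

import Mathlib

/-!
With `A = 1 - f b²/r²`, the null-ray relation `φ' = b / (r² √A)` makes the metric factor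
`1/f + r² φ'²` collapse to `1 / (f A)`, and the quotient and chain rules give `φ''` in closed form.
Substituting both, the geodesic-curvature element becomes a rational function of `r`, `b`, `f`,
`f'`, `√f` and `√A`, and the claimed identity then only uses `r² A = r² - f b²`.
-/

open Real

noncomputable def nullRayAngularRate (f : ℝ → ℝ) (b s : ℝ) : ℝ :=
  b / (s ^ 2 * √(1 - f s * b ^ 2 / s ^ 2))

/-- `k_g ds / dr` at radius `r`, for `F = f r`, `F' = f' r`, `p = φ' r` and `p' = φ'' r`. -/
noncomputable def geodesicCurvatureElement (F F' r p p' : ℝ) : ℝ :=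
  (r / √F) * ((p' + (2 / r) * p + (F' / (2 * F)) * p + F * r * p ^ 3) / (1 / F + r ^ 2 * p ^ 2))

section NullRay

variable {f : ℝ → ℝ} {f' b r : ℝ}

theorem hasDerivAt_nullRayAngularRate (hf : HasDerivAt f f' r) (hr : r ≠ 0)
    (hA : 0 < 1 - f r * b ^ 2 / r ^ 2) :
    HasDerivAt (nullRayAngularRate f b)
      (-(b * (4 * r - 2 * f r * b ^ 2 / r - f' * b ^ 2)) /
        (2 * r ^ 4 * (1 - f r * b ^ 2 / r ^ 2) * √(1 - f r * b ^ 2 / r ^ 2))) r := by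
  have hS : √(1 - f r * b ^ 2 / r ^ 2) ≠ 0 := (sqrt_pos.mpr hA).ne'
  have hsq : HasDerivAt (fun s : ℝ => s ^ 2) (2 * r) r := by
    simpa using hasDerivAt_pow 2 r
  have hArg : HasDerivAt (fun s => 1 - f s * b ^ 2 / s ^ 2)
      (0 - (f' * b ^ 2 * r ^ 2 - f r * b ^ 2 * (2 * r)) / (r ^ 2) ^ 2) r :=
    (hasDerivAt_const r 1).sub ((hf.mul_const (b ^ 2)).div hsq (pow_ne_zero 2 hr))
  refine ((hasDerivAt_const r b).div (hsq.mul (hArg.sqrt hA.ne'))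
    (mul_ne_zero (pow_ne_zero 2 hr) hS)).congr_deriv ?_
  simp only [Pi.mul_apply]
  have hS2 := sq_sqrt hA.le
  set S := √(1 - f r * b ^ 2 / r ^ 2)
  have hS2r : S ^ 2 * r ^ 2 = r ^ 2 - f r * b ^ 2 := by rw [hS2]; field_simp
  rw [← hS2]
  field_simp
  linear_combination (-4 * b) * hS2r

theorem one_div_add_sq_mul_nullRayAngularRate_sq (hr : r ≠ 0) (hf : f r ≠ 0)
    (hA : 0 < 1 - f r * b ^ 2 / r ^ 2) :
    1 / f r + r ^ 2 * nullRayAngularRate f b r ^ 2 = 1 / (f r * (1 - f r * b ^ 2 / r ^ 2)) := by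
  rw [nullRayAngularRate, div_pow, mul_pow, sq_sqrt hA.le]
  have hfb : f r * b ^ 2 = (1 - (1 - f r * b ^ 2 / r ^ 2)) * r ^ 2 := by field_simp; ring
  generalize 1 - f r * b ^ 2 / r ^ 2 = A at hA hfb ⊢
  field_simp
  linear_combination hfb

theorem geodesicCurvatureElement_nullRayAngularRate (hr : 0 < r) (hf : 0 < f r)
    (hA : 0 < 1 - f r * b ^ 2 / r ^ 2) :
    geodesicCurvatureElement (f r) f' r (nullRayAngularRate f b r)
      (-(b * (4 * r - 2 * f r * b ^ 2 / r - f' * b ^ 2)) /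
        (2 * r ^ 4 * (1 - f r * b ^ 2 / r ^ 2) * √(1 - f r * b ^ 2 / r ^ 2))) =
      f' / (2 * r) * b / √(f r * (1 - f r * b ^ 2 / r ^ 2)) := by
  rw [geodesicCurvatureElement, one_div_add_sq_mul_nullRayAngularRate_sq hr.ne' hf.ne' hA,
    nullRayAngularRate, sqrt_mul hf.le]
  have hS2 := sq_sqrt hA.le
  have hT2 := sq_sqrt hf.le
  have hS := sqrt_pos.mpr hA
  have hT := sqrt_pos.mpr hf
  set S := √(1 - f r * b ^ 2 / r ^ 2)
  set T := √(f r)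
  have hS2r : S ^ 2 * r ^ 2 = r ^ 2 - T ^ 2 * b ^ 2 := by rw [hS2, ← hT2]; field_simp
  rw [← hS2, ← hT2]
  field_simp
  linear_combination (4 * b * T ^ 2 + b * r * f') * hS2r

end NullRay

/-- Geodesic-curvature element along the projected null ray: substituting
`φ'(r) = b_γ/(r²√(1 − f b_γ²/r²))` into the general geodesic-curvature
formula yields `k_g ds = (f'/(2r)) b_γ dr / √(f(1 − f b_γ²/r²))`. -/
theorem null_ray_geodesic_curvature
    (f : ℝ → ℝ) (bγ r : ℝ)
    (hf2 : ContDiff ℝ 2 f)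
    (hr : 0 < r) (hfr : 0 < f r)
    (hdom : ∀ s : ℝ, 0 < s → 0 < 1 - f s * bγ ^ 2 / s ^ 2)
    (φ' : ℝ → ℝ)
    (hφ' : φ' = fun s => bγ / (s ^ 2 * Real.sqrt (1 - f s * bγ ^ 2 / s ^ 2))) :
    (r / Real.sqrt (f r)) *
      ((deriv φ' r + (2 / r) * φ' r + (deriv f r / (2 * f r)) * φ' r
          + f r * r * (φ' r) ^ 3) /
        ((1 / f r) + r ^ 2 * (φ' r) ^ 2))
    = (deriv f r / (2 * r)) * bγ /
        Real.sqrt (f r * (1 - f r * bγ ^ 2 / r ^ 2)) ∧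
    ((deriv f r = 0 ∨ bγ = 0) →
      (deriv f r / (2 * r)) * bγ /
        Real.sqrt (f r * (1 - f r * bγ ^ 2 / r ^ 2)) = 0) := by
  subst hφ'
  have hA := hdom r hr
  have hφ'' := hasDerivAt_nullRayAngularRate
    (hf2.differentiable (by norm_num) r).hasDerivAt hr.ne' hA
  refine ⟨?_, ?_⟩
  · change geodesicCurvatureElement (f r) (deriv f r) r (nullRayAngularRate f bγ r)
      (deriv (nullRayAngularRate f bγ) r) = _
    rw [hφ''.deriv]
    exact geodesicCurvatureElement_nullRayAngularRate hr hfr hA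
  · rintro (h | h) <;> simp [h]
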